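/- arXiv:math/0211187 — 2 statements merged into one kernel-verified Lean document; each statement's English description precedes it below -/
import Mathlib

section
/- Let V be a finite-dimensional vector space over K with φ ∈ End(V) singular, and let V = V_R ⊕ V_N be the Fitting decomposition of φ (φ bijective on V_R, nilpotent on V_N). Let μ : V ⊗ V → V be bilinear and write μ = μ_R + μ_N according to the decomposition of the target. Then the limit as t → 0 of (φ + t·id)^{-1} ∘ μ ∘ ((φ + t·id) ⊗ (φ + t·id)) exists if and only if φ² ∘ μ_N − φ ∘ μ_N ∘ (φ ⊗ id) − φ ∘ μ_N ∘ (id ⊗ φ) + μ_N ∘ (φ ⊗ φ) = 0, and in that case the limit equals φ_R^{-1} ∘ μ_R ∘ (φ ⊗ φ) + μ_N ∘ (φ ⊗ id) + μ_N ∘ (id ⊗ φ) − φ ∘ μ_N. -/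
open Filter Topology TensorProduct

/-!
Write `f_t = φ + t`. Expanding `μ (f_t x ⊗ f_t y) = a + t b + t² c` and splitting off
`f_t (b - φ c + t c)` gives `f_t⁻¹ μ (f_t x ⊗ f_t y) = f_t⁻¹ (a - φ b + φ² c) + (b - φ c) + t c`.
On `V_R`, where `φ` is invertible, `f_t⁻¹ → φ_R⁻¹` by continuity of inversion in the Banach
algebra of operators on `V_R`. The `V_N`-component of `a - φ b + φ² c` is the operator of the
statement applied to `x ⊗ y`, and for a nilpotent vector `v`, `f_t⁻¹ v` converges only if
`v = 0`.
-/

section BanachAlgebra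

variable {𝕜 𝔸 : Type*} [NontriviallyNormedField 𝕜] [NormedRing 𝔸] [NormedAlgebra 𝕜 𝔸]

theorem tendsto_add_smul_one (u : 𝔸) :
    Tendsto (fun t : 𝕜 => u + t • 1) (𝓝 0) (𝓝 u) := by
  simpa using ((continuous_id.smul continuous_const).const_add u).tendsto (0 : 𝕜)

variable [HasSummableGeomSeries 𝔸]

theorem tendsto_ring_inverse_add_smul_one (u : 𝔸ˣ) :
    Tendsto (fun t : 𝕜 => Ring.inverse ((u : 𝔸) + t • 1)) (𝓝 0) (𝓝 ↑u⁻¹) := by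
  rw [← Ring.inverse_unit]
  exact (NormedRing.inverse_continuousAt u).tendsto.comp (tendsto_add_smul_one _)

theorem eventually_isUnit_add_smul_one (u : 𝔸ˣ) :
    ∀ᶠ t : 𝕜 in 𝓝 0, IsUnit ((u : 𝔸) + t • 1) :=
  (tendsto_add_smul_one (u : 𝔸)).eventually (Units.nhds u)

end BanachAlgebra

theorem map_tmul_add_smul_one {S M P : Type*} [CommSemiring S] [AddCommMonoid M] [Module S M]
    [AddCommMonoid P] [Module S P] (μ : M ⊗[S] M →ₗ[S] P) (φ : Module.End S M) (t : S)
    (x y : M) :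
    μ ((φ + t • 1) x ⊗ₜ (φ + t • 1) y)
      = μ (φ x ⊗ₜ φ y) + t • (μ (φ x ⊗ₜ y) + μ (x ⊗ₜ φ y)) + t ^ 2 • μ (x ⊗ₜ y) := by
  simp only [LinearMap.add_apply, LinearMap.smul_apply, Module.End.one_apply,
    TensorProduct.add_tmul, TensorProduct.tmul_add, ← TensorProduct.smul_tmul',
    TensorProduct.tmul_smul, map_add, map_smul]
  module

section

variable {S V : Type*} [CommRing S] [AddCommGroup V] [Module S V]
  {φ : Module.End S V} {inv : S → Module.End S V} {t : S}

theorem apply_apply_add_smul_self (h : inv t ∘ₗ (φ + t • 1) = LinearMap.id)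
    (v : V) : inv t (φ v + t • v) = v := by
  simpa using LinearMap.congr_fun h v

theorem apply_comm_of_inverse_add_smul_one (h₁ : inv t ∘ₗ (φ + t • 1) = LinearMap.id)
    (h₂ : (φ + t • 1) ∘ₗ inv t = LinearMap.id) (v : V) : inv t (φ v) = φ (inv t v) := by
  have hv : φ (φ (inv t v)) + t • φ (inv t v) = φ v := by
    simpa using congrArg φ (LinearMap.congr_fun h₂ v)
  rw [← hv, apply_apply_add_smul_self h₁]

theorem apply_add_smul_add_sq_smul (h : inv t ∘ₗ (φ + t • 1) = LinearMap.id) (a b c : V) :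
    inv t (a + t • b + t ^ 2 • c) = inv t (a - φ b + φ (φ c)) + (b - φ c) + t • c := by
  have hsplit : a + t • b + t ^ 2 • c
      = (a - φ b + φ (φ c)) + (φ (b - φ c + t • c) + t • (b - φ c + t • c)) := by
    simp only [map_add, map_sub, map_smul]
    module
  rw [hsplit, map_add, apply_apply_add_smul_self h]
  abel

end

section

variable {𝕜 V : Type*} [NontriviallyNormedField 𝕜] [NormedAddCommGroup V] [NormedSpace 𝕜 V]
  [CompleteSpace 𝕜] [FiniteDimensional 𝕜 V] {φ : Module.End 𝕜 V} {inv : 𝕜 → Module.End 𝕜 V}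

theorem eq_zero_of_pow_apply_eq_zero_of_tendsto
    (hinv : ∀ᶠ t in 𝓝[≠] (0 : 𝕜),
      inv t ∘ₗ (φ + t • 1) = LinearMap.id ∧ (φ + t • 1) ∘ₗ inv t = LinearMap.id)
    {m : ℕ} {v L : V} (hv : (φ ^ m) v = 0)
    (hL : Tendsto (fun t => inv t v) (𝓝[≠] 0) (𝓝 L)) : v = 0 := by
  -- `inv t` commutes with `φ`, so `φ v = 0` by induction; then `v = t • inv t v → 0`.
  induction m generalizing v L with
  | zero => simpa using hv
  | succ m ih =>
    have hφv : φ v = 0 := by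
      refine ih (L := φ L) (by rwa [← Module.End.mul_apply, ← pow_succ]) ?_
      refine (φ.continuous_of_finiteDimensional.tendsto L |>.comp hL).congr' ?_
      filter_upwards [hinv] with t ht
      exact (apply_comm_of_inverse_add_smul_one ht.1 ht.2 v).symm
    have hsmul : Tendsto (fun t => t • inv t v) (𝓝[≠] 0) (𝓝 (0 : V)) := by
      simpa using (tendsto_nhdsWithin_of_tendsto_nhds tendsto_id).smul hL
    refine tendsto_nhds_unique (tendsto_const_nhds.congr' ?_) hsmul
    filter_upwards [hinv] with t ht
    simpa [hφv] using (apply_apply_add_smul_self ht.1 v).symm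

variable {R : Submodule 𝕜 V} {ψ : Module.End 𝕜 V}

theorem tendsto_apply_of_mem (hR : ∀ v ∈ R, φ v ∈ R) (hψR : ∀ v ∈ R, ψ v ∈ R)
    (hψ_right : ∀ v ∈ R, φ (ψ v) = v) (hψ_left : ∀ v ∈ R, ψ (φ v) = v)
    (hinv : ∀ᶠ t in 𝓝[≠] (0 : 𝕜), inv t ∘ₗ (φ + t • 1) = LinearMap.id)
    {r : V} (hr : r ∈ R) : Tendsto (fun t => inv t r) (𝓝[≠] 0) (𝓝 (ψ r)) := by
  -- On `R`, `inv t` is the inverse of `φ|_R + t • 1`, which tends to `ψ|_R` as `t → 0`.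
  have : CompleteSpace R := FiniteDimensional.complete 𝕜 R
  let u : (R →L[𝕜] R)ˣ :=
    { val := (φ.restrict hR).toContinuousLinearMap
      inv := (ψ.restrict hψR).toContinuousLinearMap
      val_inv := by ext v; simp [hψ_right v v.2]
      inv_val := by ext v; simp [hψ_left v v.2] }
  let B : 𝕜 → R →L[𝕜] R := fun t => Ring.inverse ((u : R →L[𝕜] R) + t • 1)
  have hB : Tendsto (fun t => (B t ⟨r, hr⟩ : V)) (𝓝[≠] 0) (𝓝 (ψ r)) := by
    have := ((ContinuousLinearMap.apply 𝕜 R (⟨r, hr⟩ : R)).continuous.tendsto _).comp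
      (tendsto_ring_inverse_add_smul_one (𝕜 := 𝕜) u)
    exact (continuous_subtype_val.tendsto _ |>.comp this).mono_left nhdsWithin_le_nhds
  refine hB.congr' ?_
  filter_upwards [hinv, nhdsWithin_le_nhds (eventually_isUnit_add_smul_one (𝕜 := 𝕜) u)]
    with t ht hunit
  have hBt := congrArg (fun A : R →L[𝕜] R => (A ⟨r, hr⟩ : V)) (Ring.mul_inverse_cancel _ hunit)
  simp only [mul_apply_eq_comp, add_apply, smul_apply, one_apply_eq_self, Submodule.coe_add,
    SetLike.val_smul] at hBt
  exact (apply_apply_add_smul_self ht _).symm.trans (congrArg (inv t) hBt)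

theorem tendsto_apply_add_smul_add_sq_smul_sub (hR : ∀ v ∈ R, φ v ∈ R)
    (hψR : ∀ v ∈ R, ψ v ∈ R) (hψ_right : ∀ v ∈ R, φ (ψ v) = v)
    (hψ_left : ∀ v ∈ R, ψ (φ v) = v)
    (hinv : ∀ᶠ t in 𝓝[≠] (0 : 𝕜), inv t ∘ₗ (φ + t • 1) = LinearMap.id)
    {piR piN : Module.End 𝕜 V} (hsum : piR + piN = LinearMap.id) (hpiR : ∀ v, piR v ∈ R)
    (a b c : V) :
    Tendsto (fun t => inv t (a + t • b + t ^ 2 • c) - inv t (piN a - φ (piN b) + φ (φ (piN c))))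
      (𝓝[≠] 0) (𝓝 (ψ (piR a) + piN b - φ (piN c))) := by
  have hN (v : V) : piN v = v - piR v := eq_sub_of_add_eq' (LinearMap.congr_fun hsum v)
  set r := piR a - φ (piR b) + φ (φ (piR c)) with hr_def
  have hr : r ∈ R :=
    R.add_mem (R.sub_mem (hpiR a) (hR _ (hpiR b))) (hR _ (hR _ (hpiR c)))
  have hlim : ψ r + (b - φ c) = ψ (piR a) + piN b - φ (piN c) := by
    rw [hr_def, map_add, map_sub, hψ_left _ (hpiR b), hψ_left _ (hR _ (hpiR c)), hN b, hN c,
      map_sub]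
    abel
  have hr_add : a - φ b + φ (φ c) = r + (piN a - φ (piN b) + φ (φ (piN c))) := by
    simp only [hr_def, hN, map_sub]
    abel
  clear_value r
  have hsmul : Tendsto (fun t : 𝕜 => t • c) (𝓝[≠] 0) (𝓝 0) := by
    simpa using ((tendsto_id : Tendsto id (𝓝 (0 : 𝕜)) _).smul_const c).mono_left
      nhdsWithin_le_nhds
  rw [← hlim, ← add_zero (ψ r + (b - φ c))]
  refine (((tendsto_apply_of_mem hR hψR hψ_right hψ_left hinv hr).add_const (b - φ c)).add
    hsmul).congr' ?_
  filter_upwards [hinv] with t ht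
  rw [apply_add_smul_add_sq_smul ht, hr_add, map_add]
  abel

theorem tendsto_apply_map_tmul_add_smul_one_sub (hR : ∀ v ∈ R, φ v ∈ R)
    (hψR : ∀ v ∈ R, ψ v ∈ R) (hψ_right : ∀ v ∈ R, φ (ψ v) = v)
    (hψ_left : ∀ v ∈ R, ψ (φ v) = v)
    (hinv : ∀ᶠ t in 𝓝[≠] (0 : 𝕜), inv t ∘ₗ (φ + t • 1) = LinearMap.id)
    {piR piN : Module.End 𝕜 V} (hsum : piR + piN = LinearMap.id) (hpiR : ∀ v, piR v ∈ R)
    (μ : V ⊗[𝕜] V →ₗ[𝕜] V) (x y : V) :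
    Tendsto (fun t => inv t (μ ((φ + t • 1) x ⊗ₜ (φ + t • 1) y))
        - inv t (piN (μ (φ x ⊗ₜ φ y)) - φ (piN (μ (φ x ⊗ₜ y) + μ (x ⊗ₜ φ y)))
          + φ (φ (piN (μ (x ⊗ₜ y))))))
      (𝓝[≠] 0) (𝓝 (ψ (piR (μ (φ x ⊗ₜ φ y))) + piN (μ (φ x ⊗ₜ y)) + piN (μ (x ⊗ₜ φ y))
        - φ (piN (μ (x ⊗ₜ y))))) := by
  simpa only [map_tmul_add_smul_one, map_add, ← add_assoc] using
    tendsto_apply_add_smul_add_sq_smul_sub hR hψR hψ_right hψ_left hinv hsum hpiR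
      (μ (φ x ⊗ₜ φ y)) (μ (φ x ⊗ₜ y) + μ (x ⊗ₜ φ y)) (μ (x ⊗ₜ y))

end

theorem stmt_14_general {V : Type*} [NormedAddCommGroup V] [NormedSpace ℂ V]
    [FiniteDimensional ℂ V]
    (φ : Module.End ℂ V)
    (R N : Submodule ℂ V)
    (hRinv : ∀ v ∈ R, φ v ∈ R) (hNinv : ∀ v ∈ N, φ v ∈ N)
    (q : ℕ) (hq : ∀ v ∈ N, (φ ^ q) v = 0)
    (piR piN : V →ₗ[ℂ] V) (hsum : piR + piN = LinearMap.id)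
    (hpiR : ∀ v, piR v ∈ R) (hpiN : ∀ v, piN v ∈ N)
    (ψ : V →ₗ[ℂ] V) (hψmem : ∀ v ∈ R, ψ v ∈ R)
    (hψ_right : ∀ v ∈ R, φ (ψ v) = v) (hψ_left : ∀ v ∈ R, ψ (φ v) = v)
    (μ : V ⊗[ℂ] V →ₗ[ℂ] V)
    (inv : ℂ → (V →ₗ[ℂ] V))
    (hinv : ∀ᶠ t in 𝓝[≠] (0 : ℂ),
      (inv t) ∘ₗ (φ + t • (1 : Module.End ℂ V)) = LinearMap.id ∧
      (φ + t • (1 : Module.End ℂ V)) ∘ₗ (inv t) = LinearMap.id) :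
    ((∀ x y : V, ∃ L : V, Tendsto
        (fun t : ℂ => inv t (μ (((φ + t • (1 : Module.End ℂ V)) x) ⊗ₜ
          ((φ + t • (1 : Module.End ℂ V)) y))))
        (𝓝[≠] 0) (𝓝 L)) ↔
      φ ∘ₗ φ ∘ₗ (piN ∘ₗ μ)
        - φ ∘ₗ (piN ∘ₗ μ) ∘ₗ TensorProduct.map (φ : V →ₗ[ℂ] V) LinearMap.id
        - φ ∘ₗ (piN ∘ₗ μ) ∘ₗ TensorProduct.map LinearMap.id (φ : V →ₗ[ℂ] V)
        + (piN ∘ₗ μ) ∘ₗ TensorProduct.map (φ : V →ₗ[ℂ] V) (φ : V →ₗ[ℂ] V) = 0) ∧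
    ((φ ∘ₗ φ ∘ₗ (piN ∘ₗ μ)
        - φ ∘ₗ (piN ∘ₗ μ) ∘ₗ TensorProduct.map (φ : V →ₗ[ℂ] V) LinearMap.id
        - φ ∘ₗ (piN ∘ₗ μ) ∘ₗ TensorProduct.map LinearMap.id (φ : V →ₗ[ℂ] V)
        + (piN ∘ₗ μ) ∘ₗ TensorProduct.map (φ : V →ₗ[ℂ] V) (φ : V →ₗ[ℂ] V) = 0) →
      ∀ x y : V, Tendsto
        (fun t : ℂ => inv t (μ (((φ + t • (1 : Module.End ℂ V)) x) ⊗ₜ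
          ((φ + t • (1 : Module.End ℂ V)) y))))
        (𝓝[≠] 0)
        (𝓝 (ψ (piR (μ (φ x ⊗ₜ φ y))) + piN (μ (φ x ⊗ₜ y)) + piN (μ (x ⊗ₜ φ y))
            - φ (piN (μ (x ⊗ₜ y)))))) := by
  set T : V ⊗[ℂ] V →ₗ[ℂ] V := φ ∘ₗ φ ∘ₗ (piN ∘ₗ μ)
      - φ ∘ₗ (piN ∘ₗ μ) ∘ₗ TensorProduct.map (φ : V →ₗ[ℂ] V) LinearMap.id
      - φ ∘ₗ (piN ∘ₗ μ) ∘ₗ TensorProduct.map LinearMap.id (φ : V →ₗ[ℂ] V)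
      + (piN ∘ₗ μ) ∘ₗ TensorProduct.map (φ : V →ₗ[ℂ] V) (φ : V →ₗ[ℂ] V)
  have hT (x y : V) : T (x ⊗ₜ y) = piN (μ (φ x ⊗ₜ φ y))
      - φ (piN (μ (φ x ⊗ₜ y) + μ (x ⊗ₜ φ y))) + φ (φ (piN (μ (x ⊗ₜ y)))) := by
    simp only [T, LinearMap.sub_apply, LinearMap.add_apply, LinearMap.comp_apply,
      TensorProduct.map_tmul, LinearMap.id_apply, map_add]
    abel
  have hlim := tendsto_apply_map_tmul_add_smul_one_sub hRinv hψmem hψ_right hψ_left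
    (hinv.mono fun _ h => h.1) hsum hpiR μ
  simp only [← hT] at hlim
  have hlim_of_eq_zero : T = 0 → ∀ x y : V, Tendsto
      (fun t : ℂ => inv t (μ (((φ + t • (1 : Module.End ℂ V)) x) ⊗ₜ
        ((φ + t • (1 : Module.End ℂ V)) y))))
      (𝓝[≠] 0)
      (𝓝 (ψ (piR (μ (φ x ⊗ₜ φ y))) + piN (μ (φ x ⊗ₜ y)) + piN (μ (x ⊗ₜ φ y))
          - φ (piN (μ (x ⊗ₜ y))))) := fun hT0 x y => by
    simpa [hT0] using hlim x y
  refine ⟨⟨fun hconv => TensorProduct.ext' fun x y => ?_,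
    fun hT0 x y => ⟨_, hlim_of_eq_zero hT0 x y⟩⟩, hlim_of_eq_zero⟩
  obtain ⟨L, hL⟩ := hconv x y
  have hTN : T (x ⊗ₜ y) ∈ N := by
    rw [hT]
    exact N.add_mem (N.sub_mem (hpiN _) (hNinv _ (hpiN _))) (hNinv _ (hNinv _ (hpiN _)))
  exact eq_zero_of_pow_apply_eq_zero_of_tendsto hinv (hq _ hTN)
    ((hL.sub (hlim x y)).congr fun t => sub_sub_cancel _ _)

/-- degeneration of an algebra.  Let `φ` be a singular
endomorphism of a finite-dimensional space `V` with Fitting decomposition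
`V = V_R ⊕ V_N` (projections `piR`, `piN`; `φ` invertible on `V_R` with
inverse `ψ`, nilpotent on `V_N`), `μ : V ⊗ V → V` bilinear, and
`f_t = φ + t·id` with inverses `inv t` for small `t ≠ 0`.  Then
`lim_{t→0} f_t⁻¹ ∘ μ ∘ (f_t ⊗ f_t)` exists iff
`φ²∘μ_N − φ∘μ_N∘(φ⊗id) − φ∘μ_N∘(id⊗φ) + μ_N∘(φ⊗φ) = 0`, and in that case the
limit is `φ_R⁻¹∘μ_R∘(φ⊗φ) + μ_N∘(φ⊗id) + μ_N∘(id⊗φ) − φ∘μ_N`. -/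
theorem stmt_14 {V : Type*} [NormedAddCommGroup V] [NormedSpace ℂ V]
    [FiniteDimensional ℂ V]
    (φ : Module.End ℂ V) (hsing : ¬ Function.Bijective φ)
    (R N : Submodule ℂ V) (hcompl : IsCompl R N)
    (hRinv : ∀ v ∈ R, φ v ∈ R) (hNinv : ∀ v ∈ N, φ v ∈ N)
    (q : ℕ) (hq : ∀ v ∈ N, (φ ^ q) v = 0)
    (piR piN : V →ₗ[ℂ] V) (hsum : piR + piN = LinearMap.id)
    (hpiR : ∀ v, piR v ∈ R) (hpiN : ∀ v, piN v ∈ N)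
    (hpiR_id : ∀ v ∈ R, piR v = v) (hpiN_id : ∀ v ∈ N, piN v = v)
    (ψ : V →ₗ[ℂ] V) (hψmem : ∀ v ∈ R, ψ v ∈ R)
    (hψ_right : ∀ v ∈ R, φ (ψ v) = v) (hψ_left : ∀ v ∈ R, ψ (φ v) = v)
    (μ : V ⊗[ℂ] V →ₗ[ℂ] V)
    (inv : ℂ → (V →ₗ[ℂ] V))
    (hinv : ∀ᶠ t in 𝓝[≠] (0 : ℂ),
      (inv t) ∘ₗ (φ + t • (1 : Module.End ℂ V)) = LinearMap.id ∧
      (φ + t • (1 : Module.End ℂ V)) ∘ₗ (inv t) = LinearMap.id) :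
    ((∀ x y : V, ∃ L : V, Tendsto
        (fun t : ℂ => inv t (μ (((φ + t • (1 : Module.End ℂ V)) x) ⊗ₜ
          ((φ + t • (1 : Module.End ℂ V)) y))))
        (𝓝[≠] 0) (𝓝 L)) ↔
      φ ∘ₗ φ ∘ₗ (piN ∘ₗ μ)
        - φ ∘ₗ (piN ∘ₗ μ) ∘ₗ TensorProduct.map (φ : V →ₗ[ℂ] V) LinearMap.id
        - φ ∘ₗ (piN ∘ₗ μ) ∘ₗ TensorProduct.map LinearMap.id (φ : V →ₗ[ℂ] V)
        + (piN ∘ₗ μ) ∘ₗ TensorProduct.map (φ : V →ₗ[ℂ] V) (φ : V →ₗ[ℂ] V) = 0) ∧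
    ((φ ∘ₗ φ ∘ₗ (piN ∘ₗ μ)
        - φ ∘ₗ (piN ∘ₗ μ) ∘ₗ TensorProduct.map (φ : V →ₗ[ℂ] V) LinearMap.id
        - φ ∘ₗ (piN ∘ₗ μ) ∘ₗ TensorProduct.map LinearMap.id (φ : V →ₗ[ℂ] V)
        + (piN ∘ₗ μ) ∘ₗ TensorProduct.map (φ : V →ₗ[ℂ] V) (φ : V →ₗ[ℂ] V) = 0) →
      ∀ x y : V, Tendsto
        (fun t : ℂ => inv t (μ (((φ + t • (1 : Module.End ℂ V)) x) ⊗ₜ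
          ((φ + t • (1 : Module.End ℂ V)) y))))
        (𝓝[≠] 0)
        (𝓝 (ψ (piR (μ (φ x ⊗ₜ φ y))) + piN (μ (φ x ⊗ₜ y)) + piN (μ (x ⊗ₜ φ y))
            - φ (piN (μ (x ⊗ₜ y)))))) :=
  stmt_14_general φ R N hRinv hNinv q hq piR piN hsum hpiR hpiN ψ hψmem hψ_right hψ_left μ inv hinv
end

section
/- Let V be a vector space over K and φ ∈ End(V) nilpotent with φ^q = 0, and let w(t) = t²A + tB + C with A, B, C ∈ V. Then lim_{t→0} (φ + t·id)^{-1}(w(t)) = lim_{t→0} (1/t)Σ_{i=0}^{q-1}(−φ/t)^i(t²A + tB + C) exists if and only if φ²(A) − φ(B) + C = 0, and in that case the limit equals B − φ(A). -/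
open Filter Topology

private lemma aux_key {V : Type*} [NormedAddCommGroup V] [NormedSpace ℂ V]
    (φ : Module.End ℂ V) (q : ℕ) (hφ : φ ^ q = 0) (A B C : V)
    (t : ℂ) (ht : t ≠ 0) :
    (t⁻¹ • ∑ i ∈ Finset.range q, (-(t⁻¹ • φ)) ^ i) (t ^ 2 • A + t • B + C)
      = t • A + (B - φ A) +
        ∑ i ∈ Finset.range q, (t⁻¹) ^ (i + 1) • (((-1 : ℂ) ^ i) • (φ ^ i) (φ (φ A) - φ B + C)) := by
  set x : Module.End ℂ V := -(t⁻¹ • φ) with hxdef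
  set S : Module.End ℂ V := ∑ i ∈ Finset.range q, x ^ i with hSdef
  have hx : x ^ q = 0 := by
    have hx' : x = (-t⁻¹) • φ := by rw [hxdef, neg_smul]
    rw [hx', smul_pow, hφ, smul_zero]
  have hgeom : S * (1 - x) = 1 := by
    have h := geom_sum_mul x q
    rw [hx, zero_sub] at h
    calc S * (1 - x) = -(S * (x - 1)) := by rw [mul_one_sub, mul_sub_one, neg_sub]
    _ = 1 := by rw [hSdef, h, neg_neg]
  have h1 : (1 : Module.End ℂ V) - x = t⁻¹ • (φ + t • 1) := by
    rw [hxdef, smul_add, smul_smul, inv_mul_cancel₀ ht, one_smul, sub_neg_eq_add]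
    abel
  set u : V := t • A + (B - φ A) with hudef
  set D : V := φ (φ A) - φ B + C with hDdef
  have hdecomp : t ^ 2 • A + t • B + C = (φ + t • 1) u + D := by
    simp only [hudef, hDdef, LinearMap.add_apply, LinearMap.smul_apply, Module.End.one_apply,
      map_add, map_smul, map_sub]
    rw [pow_two, ← smul_smul]
    module
  have hSinv : (t⁻¹ • S) * (φ + t • 1) = 1 := by
    rw [smul_mul_assoc, ← mul_smul_comm, ← h1, hgeom]
  rw [hdecomp, map_add]
  congr 1
  · have h2 : ((t⁻¹ • S) * (φ + t • 1)) u = (t⁻¹ • S) ((φ + t • 1) u) := rfl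
    rw [← h2, hSinv, Module.End.one_apply]
  · rw [LinearMap.smul_apply, hSdef, LinearMap.sum_apply, Finset.smul_sum]
    refine Finset.sum_congr rfl fun i _ => ?_
    have hxi : x ^ i = (-t⁻¹) ^ i • φ ^ i := by
      rw [hxdef, ← neg_smul, smul_pow]
    rw [hxi, LinearMap.smul_apply, smul_smul, smul_smul]
    congr 1
    rw [neg_pow]
    ring

private lemma aux_vanish {V : Type*} [NormedAddCommGroup V] [NormedSpace ℂ V] :
    ∀ (m : ℕ) (w : ℕ → V) (M : V),
      Tendsto (fun t : ℂ => ∑ i ∈ Finset.range m, (t⁻¹) ^ (i + 1) • w i) (𝓝[≠] 0) (𝓝 M) →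
      ∀ i < m, w i = 0 := by
  intro m
  induction m with
  | zero => intro w M _ i hi; omega
  | succ m ih =>
    intro w M h
    have hpow : Tendsto (fun t : ℂ => t ^ (m + 1)) (𝓝[≠] 0) (𝓝 0) := by
      have := (continuous_pow (m + 1)).tendsto (0 : ℂ)
      simpa using this.mono_left nhdsWithin_le_nhds
    have h2 : Tendsto (fun t : ℂ =>
        t ^ (m + 1) • ∑ i ∈ Finset.range (m + 1), (t⁻¹) ^ (i + 1) • w i) (𝓝[≠] 0) (𝓝 0) := by
      simpa using hpow.smul h
    have heq : ∀ᶠ t : ℂ in 𝓝[≠] 0,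
        t ^ (m + 1) • ∑ i ∈ Finset.range (m + 1), (t⁻¹) ^ (i + 1) • w i
          = ∑ i ∈ Finset.range (m + 1), t ^ (m - i) • w i := by
      filter_upwards [self_mem_nhdsWithin] with t ht
      rw [Finset.smul_sum]
      refine Finset.sum_congr rfl fun i hi => ?_
      rw [smul_smul]
      congr 1
      have hi' : i + 1 ≤ m + 1 := by
        have := Finset.mem_range.mp hi; omega
      rw [inv_pow, ← pow_sub₀ t ht hi']
      congr 1
      omega
    have h3 : Tendsto (fun t : ℂ => ∑ i ∈ Finset.range (m + 1), t ^ (m - i) • w i)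
        (𝓝[≠] 0) (𝓝 0) := h2.congr' heq
    have hcont : Tendsto (fun t : ℂ => ∑ i ∈ Finset.range (m + 1), t ^ (m - i) • w i)
        (𝓝[≠] 0) (𝓝 (w m)) := by
      have hc : Continuous (fun t : ℂ => ∑ i ∈ Finset.range (m + 1), t ^ (m - i) • w i) :=
        continuous_finset_sum _ fun i _ => (continuous_pow _).smul continuous_const
      have hval : ∑ i ∈ Finset.range (m + 1), (0 : ℂ) ^ (m - i) • w i = w m := by
        rw [Finset.sum_eq_single_of_mem m (Finset.self_mem_range_succ m)]
        · simp
        · intro i hi hne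
          have : m - i ≠ 0 := by
            have := Finset.mem_range.mp hi; omega
          rw [zero_pow this, zero_smul]
      have := hc.tendsto (0 : ℂ)
      rw [hval] at this
      exact this.mono_left nhdsWithin_le_nhds
    have hwm : w m = 0 := tendsto_nhds_unique hcont h3
    have hrest : Tendsto (fun t : ℂ => ∑ i ∈ Finset.range m, (t⁻¹) ^ (i + 1) • w i)
        (𝓝[≠] 0) (𝓝 M) := by
      refine h.congr fun t => ?_
      rw [Finset.sum_range_succ, hwm, smul_zero, add_zero]
    intro i hi
    rcases Nat.lt_succ_iff_lt_or_eq.mp hi with h' | h'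
    · exact ih w M hrest i h'
    · rw [h']; exact hwm

/-- let `φ` be nilpotent with `φ^q = 0` and `A, B, C ∈ V`.
The limit as `t → 0` of `(φ + t·id)⁻¹(t²A + tB + C)
= (1/t)·Σ_{i=0}^{q-1}(−φ/t)^i (t²A + tB + C)` exists iff
`φ²(A) − φ(B) + C = 0`, in which case the limit is `B − φ(A)`. -/
theorem stmt_15 {V : Type*} [NormedAddCommGroup V] [NormedSpace ℂ V]
    (φ : Module.End ℂ V) (q : ℕ) (hφ : φ ^ q = 0) (A B C : V) :
    ((∃ L : V, Tendsto
        (fun t : ℂ =>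
          (t⁻¹ • ∑ i ∈ Finset.range q, (-(t⁻¹ • φ)) ^ i) (t ^ 2 • A + t • B + C))
        (𝓝[≠] 0) (𝓝 L)) ↔ φ (φ A) - φ B + C = 0) ∧
    (φ (φ A) - φ B + C = 0 → Tendsto
        (fun t : ℂ =>
          (t⁻¹ • ∑ i ∈ Finset.range q, (-(t⁻¹ • φ)) ^ i) (t ^ 2 • A + t • B + C))
        (𝓝[≠] 0) (𝓝 (B - φ A))) := by
  rcases Nat.eq_zero_or_pos q with hq | hq
  · -- q = 0 : V is trivial
    subst hq
    have hV : ∀ v : V, v = 0 := by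
      intro v
      have : (φ ^ 0) v = 0 := by rw [hφ]; rfl
      simpa using this
    have hfun : ∀ t : ℂ,
        (t⁻¹ • ∑ i ∈ Finset.range 0, (-(t⁻¹ • φ)) ^ i) (t ^ 2 • A + t • B + C) = 0 := by
      intro t; simp
    constructor
    · constructor
      · intro _; rw [hV (φ (φ A) - φ B + C)]
      · intro _
        refine ⟨0, ?_⟩
        simp only [hfun]
        exact tendsto_const_nhds
    · intro _
      rw [← hV (B - φ A)] at *
      simp only [hfun]
      rw [hV (B - φ A)]
      exact tendsto_const_nhds
  · set D : V := φ (φ A) - φ B + C with hDdef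
    set f : ℂ → V := fun t : ℂ =>
      (t⁻¹ • ∑ i ∈ Finset.range q, (-(t⁻¹ • φ)) ^ i) (t ^ 2 • A + t • B + C) with hfdef
    have hkey : ∀ᶠ t : ℂ in 𝓝[≠] 0, f t = t • A + (B - φ A) +
        ∑ i ∈ Finset.range q, (t⁻¹) ^ (i + 1) • (((-1 : ℂ) ^ i) • (φ ^ i) D) := by
      filter_upwards [self_mem_nhdsWithin] with t ht
      exact aux_key φ q hφ A B C t ht
    have hlin : Tendsto (fun t : ℂ => t • A + (B - φ A)) (𝓝[≠] 0) (𝓝 (B - φ A)) := by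
      have : Tendsto (fun t : ℂ => t • A + (B - φ A)) (𝓝 0) (𝓝 ((0 : ℂ) • A + (B - φ A))) :=
        ((continuous_id.smul continuous_const).add continuous_const).tendsto 0
      rw [zero_smul, zero_add] at this
      exact this.mono_left nhdsWithin_le_nhds
    have main : D = 0 → Tendsto f (𝓝[≠] 0) (𝓝 (B - φ A)) := by
      intro hD
      refine hlin.congr' ?_
      filter_upwards [hkey] with t ht
      rw [ht, hD]
      simp
    refine ⟨⟨?_, fun hD => ⟨B - φ A, main hD⟩⟩, main⟩
    rintro ⟨L, hL⟩
    have hsum : Tendsto (fun t : ℂ =>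
        ∑ i ∈ Finset.range q, (t⁻¹) ^ (i + 1) • (((-1 : ℂ) ^ i) • (φ ^ i) D))
        (𝓝[≠] 0) (𝓝 (L - (B - φ A))) := by
      have hsub : Tendsto (fun t : ℂ => f t - (t • A + (B - φ A))) (𝓝[≠] 0)
          (𝓝 (L - (B - φ A))) := hL.sub hlin
      refine hsub.congr' ?_
      filter_upwards [hkey] with t ht
      rw [ht]
      abel
    have h0 := aux_vanish q _ _ hsum 0 hq
    simpa using h0
end
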